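/- arXiv:2510.07965 — 3 statements merged into one kernel-verified Lean document; each statement's English description precedes it below -/
import Mathlib

section
/- Let X be a real-valued random variable whose survival function satisfies P(|X| ≥ x) = exp(−α(log x)^p)·L(x) for x large, where L is slowly varying and log L(x) = o((log x)^p), with α > 0 and p > 0. Let f : ℝ → ℝ be bijective with f and f⁻¹ globally Lipschitz. Then the survival function of f(X) satisfies −log P(|f(X)| ≥ t) = α(log t)^p·(1 + o(1)) as t → ∞; i.e., f(X) belongs to the same log-Weibull tail class with the same parameters (α, p). -/
open Filter MeasureTheory Real

/-- A function is slowly varying at infinity if `L (c*x) / L x → 1` for every `c > 0`. -/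
def SlowlyVarying (L : ℝ → ℝ) : Prop :=
  ∀ c : ℝ, 0 < c → Tendsto (fun x => L (c * x) / L x) atTop (nhds 1)

/-!
A bi-Lipschitz map satisfies `m |x| - |f 0| ≤ |f x| ≤ M |x| + |f 0|`, so the tail of `f(X)` at
`t` is squeezed between the tails of `X` at the affine points `(t + |f 0|) / m` and
`(t - |f 0|) / M`.
An affine change of variable leaves `log t` unchanged to first order, so both bounds, and with
them the tail of `f(X)`, satisfy `-log P = α (log t)^p (1 + o(1))`.
-/

open Topology

-- The positivity conjunct keeps `log` away from its junk values on `G t ≤ 0`.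
def IsLogWeibullTail (α p : ℝ) (G : ℝ → ℝ) : Prop :=
  (∀ᶠ t in atTop, 0 < G t) ∧ Tendsto (fun t => -log (G t) / (α * log t ^ p)) atTop (𝓝 1)

theorem isLogWeibullTail_of_eventuallyEq {α p : ℝ} (hα : α ≠ 0) {G L : ℝ → ℝ}
    (hLpos : ∀ᶠ x in atTop, 0 < L x)
    (hLsmall : Tendsto (fun x => log (L x) / log x ^ p) atTop (𝓝 0))
    (hG : ∀ᶠ x in atTop, G x = exp (-α * log x ^ p) * L x) :
    IsLogWeibullTail α p G := by
  refine ⟨?_, ?_⟩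
  · filter_upwards [hG, hLpos] with x hGx hLx
    rw [hGx]
    positivity
  · have hlim : Tendsto (fun x => 1 - log (L x) / log x ^ p / α) atTop (𝓝 1) := by
      simpa using tendsto_const_nhds.sub (hLsmall.div_const α)
    refine hlim.congr' ?_
    filter_upwards [hG, hLpos, eventually_gt_atTop 1] with x hGx hLx hx
    have : 0 < log x ^ p := rpow_pos_of_pos (log_pos hx) p
    rw [hGx, log_mul (exp_pos _).ne' hLx.ne', log_exp]
    field_simp
    ring

theorem tendsto_log_affine_div_log {a : ℝ} (ha : 0 < a) (b : ℝ) :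
    Tendsto (fun t => log ((t + b) / a) / log t) atTop (𝓝 1) := by
  have hdiff : Tendsto (fun t => 1 + (log (t + b) - log t - log a) / log t) atTop (𝓝 1) := by
    simpa using
      (((tendsto_log_comp_add_sub_log b).sub_const (log a)).div_atTop tendsto_log_atTop).const_add 1
  refine hdiff.congr' ?_
  filter_upwards [eventually_gt_atTop 1, eventually_gt_atTop (-b)] with t ht htb
  rw [log_div (by linarith) ha.ne']
  field_simp [(log_pos ht).ne']
  ring

theorem tendsto_log_affine_rpow_div_log_rpow {a : ℝ} (ha : 0 < a) (b p : ℝ) :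
    Tendsto (fun t => log ((t + b) / a) ^ p / log t ^ p) atTop (𝓝 1) := by
  have hu : Tendsto (fun t : ℝ => (t + b) / a) atTop atTop :=
    (tendsto_atTop_add_const_right _ b tendsto_id).atTop_div_const ha
  have hlim := (tendsto_log_affine_div_log ha b).rpow_const (p := p) (Or.inl one_ne_zero)
  rw [one_rpow] at hlim
  refine hlim.congr' ?_
  filter_upwards [hu.eventually (eventually_ge_atTop 1), eventually_ge_atTop 1] with t hut ht
  exact div_rpow (log_nonneg hut) (log_nonneg ht) p

namespace IsLogWeibullTail

variable {α p : ℝ}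

theorem comp_affine {G : ℝ → ℝ} (hG : IsLogWeibullTail α p G) {a : ℝ} (ha : 0 < a)
    (b : ℝ) :
    IsLogWeibullTail α p (fun t => G ((t + b) / a)) := by
  have hu : Tendsto (fun t : ℝ => (t + b) / a) atTop atTop :=
    (tendsto_atTop_add_const_right _ b tendsto_id).atTop_div_const ha
  refine ⟨hu.eventually hG.1, ?_⟩
  have hlim := (hG.2.comp hu).mul (tendsto_log_affine_rpow_div_log_rpow ha b p)
  rw [one_mul] at hlim
  refine hlim.congr' ?_
  filter_upwards [hu.eventually (eventually_gt_atTop 1)] with t hut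
  have : log ((t + b) / a) ^ p ≠ 0 := (rpow_pos_of_pos (log_pos hut) p).ne'
  simp only [Function.comp_apply]
  rw [div_mul_div_comm, mul_right_comm, mul_div_mul_right _ _ this]

theorem of_le_of_le (hα : 0 < α) {G₁ G₂ H : ℝ → ℝ}
    (h₁ : IsLogWeibullTail α p G₁) (h₂ : IsLogWeibullTail α p G₂)
    (hle₁ : ∀ᶠ t in atTop, G₁ t ≤ H t) (hle₂ : ∀ᶠ t in atTop, H t ≤ G₂ t) :
    IsLogWeibullTail α p H := by
  have hHpos : ∀ᶠ t in atTop, 0 < H t := by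
    filter_upwards [h₁.1, hle₁] with t h h' using h.trans_le h'
  have hD : ∀ᶠ t in atTop, 0 < α * log t ^ p := by
    filter_upwards [eventually_gt_atTop 1] with t ht
    exact mul_pos hα (rpow_pos_of_pos (log_pos ht) p)
  refine ⟨hHpos, tendsto_of_tendsto_of_tendsto_of_le_of_le' h₂.2 h₁.2 ?_ ?_⟩
  · filter_upwards [hHpos, hle₂, hD] with t hH hle hDt
    gcongr
  · filter_upwards [h₁.1, hle₁, hD] with t hG hle hDt
    gcongr

end IsLogWeibullTail

theorem abs_le_mul_abs_add_of_lipschitz {f : ℝ → ℝ} {M : ℝ}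
    (hf : ∀ x y, |f x - f y| ≤ M * |x - y|) (x : ℝ) : |f x| ≤ M * |x| + |f 0| := by
  have := hf x 0
  rw [sub_zero] at this
  linarith [abs_sub_abs_le_abs_sub (f x) (f 0)]

theorem mul_abs_sub_le_abs_of_invFun_lipschitz {f : ℝ → ℝ} (hf : Function.Injective f)
    {m : ℝ} (hm : 0 < m)
    (hfinv : ∀ u v, |Function.invFun f u - Function.invFun f v| ≤ (1 / m) * |u - v|)
    (x : ℝ) : m * |x| - |f 0| ≤ |f x| := by
  have h := hfinv (f x) (f 0)
  rw [Function.leftInverse_invFun hf x, Function.leftInverse_invFun hf 0, sub_zero,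
    one_div_mul_eq_div, le_div_iff₀' hm] at h
  linarith [abs_sub (f x) (f 0)]

theorem bilipschitz_preserves_logWeibull_class_general
    {Ω : Type*} [MeasureSpace Ω] (μ : Measure Ω) [IsProbabilityMeasure μ]
    (X : Ω → ℝ)
    (α p : ℝ) (hα : 0 < α)
    (L : ℝ → ℝ) (hLpos : ∀ x, 0 < x → 0 < L x)
    (hLsmall : Tendsto (fun x => Real.log (L x) / (Real.log x) ^ p) atTop (nhds 0))
    (htail : ∀ᶠ x in atTop,
      (μ {ω | x ≤ |X ω|}).toReal = Real.exp (-α * (Real.log x) ^ p) * L x)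
    (f : ℝ → ℝ) (hbij : Function.Bijective f)
    (Mf mf : ℝ) (hMf : 0 < Mf) (hmf : 0 < mf)
    (hfLip : ∀ x y, |f x - f y| ≤ Mf * |x - y|)
    (hfinvLip : ∀ u v, |Function.invFun f u - Function.invFun f v| ≤ (1 / mf) * |u - v|) :
    Tendsto (fun t =>
        (-Real.log ((μ {ω | t ≤ |f (X ω)|}).toReal)) / (α * (Real.log t) ^ p))
      atTop (nhds 1) := by
  have hXtail : IsLogWeibullTail α p fun x => (μ {ω | x ≤ |X ω|}).toReal :=
    isLogWeibullTail_of_eventuallyEq hα.ne' ((eventually_gt_atTop 0).mono hLpos) hLsmall htail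
  have hsub_lower (t : ℝ) : {ω | (t + |f 0|) / mf ≤ |X ω|} ⊆ {ω | t ≤ |f (X ω)|} := by
    intro ω (hω : (t + |f 0|) / mf ≤ |X ω|)
    rw [div_le_iff₀' hmf] at hω
    show t ≤ |f (X ω)|
    linarith [mul_abs_sub_le_abs_of_invFun_lipschitz hbij.injective hmf hfinvLip (X ω)]
  have hsub_upper (t : ℝ) : {ω | t ≤ |f (X ω)|} ⊆ {ω | (t + -|f 0|) / Mf ≤ |X ω|} := by
    intro ω (hω : t ≤ |f (X ω)|)
    show (t + -|f 0|) / Mf ≤ |X ω|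
    rw [div_le_iff₀' hMf]
    linarith [abs_le_mul_abs_add_of_lipschitz hfLip (X ω)]
  exact (IsLogWeibullTail.of_le_of_le hα
    (hXtail.comp_affine hmf |f 0|) (hXtail.comp_affine hMf (-|f 0|))
    (.of_forall fun t => measureReal_mono (hsub_lower t))
    (.of_forall fun t => measureReal_mono (hsub_upper t))).2

/-- bi-Lipschitz bijections preserve the log-Weibull tail class `𝓛ᵖ_α`
with the same parameters: `-log P(|f(X)| ≥ t) = α (log t)^p (1 + o(1))`. -/
theorem bilipschitz_preserves_logWeibull_class
    {Ω : Type*} [MeasureSpace Ω] (μ : Measure Ω) [IsProbabilityMeasure μ]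
    (X : Ω → ℝ) (hX : Measurable X)
    (α p : ℝ) (hα : 0 < α) (hp : 0 < p)
    (L : ℝ → ℝ) (hLpos : ∀ x, 0 < x → 0 < L x) (hL : SlowlyVarying L)
    (hLsmall : Tendsto (fun x => Real.log (L x) / (Real.log x) ^ p) atTop (nhds 0))
    (htail : ∀ᶠ x in atTop,
      (μ {ω | x ≤ |X ω|}).toReal = Real.exp (-α * (Real.log x) ^ p) * L x)
    (f : ℝ → ℝ) (hbij : Function.Bijective f)
    (Mf mf : ℝ) (hMf : 0 < Mf) (hmf : 0 < mf)
    (hfLip : ∀ x y, |f x - f y| ≤ Mf * |x - y|)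
    (hfinvLip : ∀ u v, |Function.invFun f u - Function.invFun f v| ≤ (1 / mf) * |u - v|) :
    Tendsto (fun t =>
        (-Real.log ((μ {ω | t ≤ |f (X ω)|}).toReal)) / (α * (Real.log t) ^ p))
      atTop (nhds 1) :=
  bilipschitz_preserves_logWeibull_class_general μ X α p hα L hLpos hLsmall htail f hbij Mf mf hMf
    hmf hfLip hfinvLip
end

section
/- Let X be a real-valued random variable with P(|X| ≥ x) = exp(−α x^p)·L(x) where L is slowly varying, log L(x) = o(x^p), α > 0, p > 0. Let f : ℝ → ℝ be bijective with f being M-Lipschitz and f⁻¹ being (1/m)-Lipschitz. Then there exists α̃ ∈ [α/M^p, α/m^p] such that −log P(|f(X)| ≥ t) = α̃·t^p·(1+o(1)) along a subsequence; in particular, limsup_{t→∞} −log P(|f(X)| ≥ t)/t^p ≤ α/m^p and liminf_{t→∞} −log P(|f(X)| ≥ t)/t^p ≥ α/M^p. -/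
open Filter MeasureTheory Real

open Topology

/-! Since `f` is `M`-Lipschitz and `f⁻¹` is `1/m`-Lipschitz,
`m |x| - |f 0| ≤ |f x| ≤ M |x| + |f 0|`, so the tail of `f(X)` at `t` is sandwiched between
the tails of `X` at `(t + |f 0|) / m` and `(t - |f 0|) / M`. The hypotheses on `L` give
`-log P(|X| ≥ y) / y ^ p → α`, and an affine change of variable `y = (t ± |f 0|) / k` turns
this into a limit `α / k ^ p` in the variable `t`. Hence `-log P(|f(X)| ≥ t) / t ^ p` is squeezed
between two functions tending to `α / M ^ p` and `α / m ^ p`; its values along the integers stay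
bounded and Bolzano–Weierstrass produces the convergent subsequence. -/

section BiLipschitz

variable {f : ℝ → ℝ}

theorem le_abs_apply_of_div_le_abs {m : ℝ} (hf : Function.Injective f) (hm : 0 < m)
    (hfinv : ∀ u v, |Function.invFun f u - Function.invFun f v| ≤ (1 / m) * |u - v|)
    {t x : ℝ} (hx : (t + |f 0|) / m ≤ |x|) : t ≤ |f x| := by
  have hinv := hfinv (f x) (f 0)
  rw [Function.leftInverse_invFun hf, Function.leftInverse_invFun hf, sub_zero,
    one_div_mul_eq_div, le_div_iff₀' hm] at hinv
  rw [div_le_iff₀' hm] at hx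
  linarith [abs_sub (f x) (f 0)]

theorem div_le_abs_of_le_abs_apply {M : ℝ} (hM : 0 < M)
    (hf : ∀ x y, |f x - f y| ≤ M * |x - y|) {t x : ℝ} (hx : t ≤ |f x|) :
    (t - |f 0|) / M ≤ |x| := by
  have hlip := hf x 0
  rw [sub_zero] at hlip
  rw [div_le_iff₀' hM]
  linarith [abs_sub_abs_le_abs_sub (f x) (f 0)]

end BiLipschitz

theorem neg_log_measureReal_le_of_subset {Ω : Type*} [MeasurableSpace Ω] {μ : Measure Ω}
    [IsFiniteMeasure μ] {s t : Set Ω} (hst : s ⊆ t) (hs : 0 < μ.real s) :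
    -log (μ.real t) ≤ -log (μ.real s) :=
  neg_le_neg (log_le_log hs (measureReal_mono hst))

theorem neg_log_tail_comp_bounds {Ω : Type*} [MeasurableSpace Ω] {μ : Measure Ω}
    [IsFiniteMeasure μ] (X : Ω → ℝ) {f : ℝ → ℝ} (hf : Function.Injective f)
    {M m t : ℝ} (hM : 0 < M) (hm : 0 < m) (hfLip : ∀ x y, |f x - f y| ≤ M * |x - y|)
    (hfinv : ∀ u v, |Function.invFun f u - Function.invFun f v| ≤ (1 / m) * |u - v|)
    (hpos : 0 < μ.real {ω | (t + |f 0|) / m ≤ |X ω|}) :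
    -log (μ.real {ω | (t - |f 0|) / M ≤ |X ω|}) ≤ -log (μ.real {ω | t ≤ |f (X ω)|}) ∧
      -log (μ.real {ω | t ≤ |f (X ω)|}) ≤
        -log (μ.real {ω | (t + |f 0|) / m ≤ |X ω|}) := by
  have hup : {ω | (t + |f 0|) / m ≤ |X ω|} ⊆ {ω | t ≤ |f (X ω)|} :=
    fun _ => le_abs_apply_of_div_le_abs hf hm hfinv
  have hdown : {ω | t ≤ |f (X ω)|} ⊆ {ω | (t - |f 0|) / M ≤ |X ω|} :=
    fun _ => div_le_abs_of_le_abs_apply hM hfLip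
  exact ⟨neg_log_measureReal_le_of_subset hdown (hpos.trans_le (measureReal_mono hup)),
    neg_log_measureReal_le_of_subset hup hpos⟩

theorem tendsto_neg_log_exp_mul_div_rpow {S L : ℝ → ℝ} {α p : ℝ}
    (hLpos : ∀ y, 0 < y → 0 < L y)
    (hLsmall : Tendsto (fun y => log (L y) / y ^ p) atTop (𝓝 0))
    (hS : ∀ᶠ y in atTop, S y = exp (-α * y ^ p) * L y) :
    Tendsto (fun y => -log (S y) / y ^ p) atTop (𝓝 α) := by
  have hlim : Tendsto (fun y => α - log (L y) / y ^ p) atTop (𝓝 α) := by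
    simpa using tendsto_const_nhds.sub hLsmall
  refine hlim.congr' ?_
  filter_upwards [hS, eventually_gt_atTop 0] with y hSy hy
  rw [hSy, log_mul (exp_ne_zero _) (hLpos y hy).ne', log_exp]
  field_simp [(rpow_pos_of_pos hy p).ne']
  ring

theorem tendsto_comp_affine_div_rpow {φ : ℝ → ℝ} {a p k : ℝ} (d : ℝ) (hk : 0 < k)
    (hφ : Tendsto (fun y => φ y / y ^ p) atTop (𝓝 a)) :
    Tendsto (fun t => φ ((t + d) / k) / t ^ p) atTop (𝓝 (a / k ^ p)) := by
  have hy : Tendsto (fun t : ℝ => (t + d) / k) atTop atTop :=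
    (tendsto_atTop_add_const_right _ d tendsto_id).atTop_div_const hk
  have hratio : Tendsto (fun t : ℝ => (t + d) / k / t) atTop (𝓝 (1 / k)) := by
    have hlim : Tendsto (fun t : ℝ => (1 + d / t) / k) atTop (𝓝 ((1 + 0) / k)) :=
      (tendsto_const_nhds.add (tendsto_const_nhds.div_atTop tendsto_id)).div_const k
    rw [add_zero] at hlim
    refine hlim.congr' ?_
    filter_upwards [eventually_ne_atTop 0] with t ht
    field_simp
  have hpow : Tendsto (fun t : ℝ => ((t + d) / k / t) ^ p) atTop (𝓝 ((1 / k) ^ p)) :=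
    (continuousAt_rpow_const _ p (Or.inl (by positivity))).tendsto.comp hratio
  have hprod := (hφ.comp hy).mul hpow
  rw [one_div, inv_rpow hk.le, ← div_eq_mul_inv] at hprod
  refine hprod.congr' ?_
  filter_upwards [eventually_gt_atTop 0, hy.eventually_gt_atTop 0] with t ht hyt
  rw [Function.comp_apply, div_rpow hyt.le ht.le]
  field_simp [(rpow_pos_of_pos hyt p).ne', (rpow_pos_of_pos ht p).ne']

section Squeeze

variable {g lo hi : ℝ → ℝ} {a b : ℝ}

theorem limsup_le_of_eventually_le_of_tendsto (hlo : Tendsto lo atTop (𝓝 a))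
    (hhi : Tendsto hi atTop (𝓝 b)) (hg : ∀ᶠ t in atTop, lo t ≤ g t ∧ g t ≤ hi t) :
    limsup g atTop ≤ b := by
  have hbdd : IsBoundedUnder (· ≥ ·) atTop g :=
    hlo.isBoundedUnder_ge.mono_ge (hg.mono fun _ h => h.1)
  calc limsup g atTop ≤ limsup hi atTop :=
        limsup_le_limsup (hg.mono fun _ h => h.2) hbdd.isCoboundedUnder_le hhi.isBoundedUnder_le
    _ = b := hhi.limsup_eq

theorem le_liminf_of_eventually_le_of_tendsto (hlo : Tendsto lo atTop (𝓝 a))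
    (hhi : Tendsto hi atTop (𝓝 b)) (hg : ∀ᶠ t in atTop, lo t ≤ g t ∧ g t ≤ hi t) :
    a ≤ liminf g atTop := by
  have hbdd : IsBoundedUnder (· ≤ ·) atTop g :=
    hhi.isBoundedUnder_le.mono_le (hg.mono fun _ h => h.2)
  calc a = liminf lo atTop := hlo.liminf_eq.symm
    _ ≤ liminf g atTop :=
        liminf_le_liminf (hg.mono fun _ h => h.1) hlo.isBoundedUnder_ge hbdd.isCoboundedUnder_ge

theorem exists_tendsto_subseq_of_eventually_le_of_tendsto (hlo : Tendsto lo atTop (𝓝 a))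
    (hhi : Tendsto hi atTop (𝓝 b)) (hg : ∀ᶠ t in atTop, lo t ≤ g t ∧ g t ≤ hi t) :
    ∃ c, a ≤ c ∧ c ≤ b ∧ ∃ t : ℕ → ℝ, StrictMono t ∧ Tendsto t atTop atTop ∧
      Tendsto (fun n => g (t n)) atTop (𝓝 c) := by
  have hbox : ∀ᶠ t in atTop, g t ∈ Set.Icc (a - 1) (b + 1) := by
    filter_upwards [hg, hlo.eventually (eventually_ge_nhds (sub_one_lt a)),
      hhi.eventually (eventually_le_nhds (lt_add_one b))] with t hgt hlot hhit
    exact ⟨hlot.trans hgt.1, hgt.2.trans hhit⟩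
  obtain ⟨c, -, φ, hφ, hc⟩ := tendsto_subseq_of_frequently_bounded (Metric.isBounded_Icc _ _)
    (tendsto_natCast_atTop_atTop.eventually hbox).frequently
  have ht : Tendsto (fun n => (φ n : ℝ)) atTop atTop :=
    tendsto_natCast_atTop_atTop.comp hφ.tendsto_atTop
  refine ⟨c, le_of_tendsto_of_tendsto (hlo.comp ht) hc (ht.eventually (hg.mono fun _ h => h.1)),
    le_of_tendsto_of_tendsto hc (hhi.comp ht) (ht.eventually (hg.mono fun _ h => h.2)),
    fun n => φ n, Nat.strictMono_cast.comp hφ, ht, hc⟩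

end Squeeze

theorem bilipschitz_preserves_exponential_class_general
    {Ω : Type*} [MeasureSpace Ω] (μ : Measure Ω) [IsProbabilityMeasure μ]
    (X : Ω → ℝ)
    (α p : ℝ)
    (L : ℝ → ℝ) (hLpos : ∀ x, 0 < x → 0 < L x)
    (hLsmall : Tendsto (fun x => Real.log (L x) / x ^ p) atTop (nhds 0))
    (htail : ∀ᶠ x in atTop,
      (μ {ω | x ≤ |X ω|}).toReal = Real.exp (-α * x ^ p) * L x)
    (f : ℝ → ℝ) (hbij : Function.Bijective f)
    (M m : ℝ) (hm : 0 < m) (hMm : m ≤ M)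
    (hfLip : ∀ x y, |f x - f y| ≤ M * |x - y|)
    (hfinvLip : ∀ u v, |Function.invFun f u - Function.invFun f v| ≤ (1 / m) * |u - v|) :
    (limsup (fun t => (-Real.log ((μ {ω | t ≤ |f (X ω)|}).toReal)) / t ^ p) atTop
        ≤ α / m ^ p) ∧
    (α / M ^ p ≤
      liminf (fun t => (-Real.log ((μ {ω | t ≤ |f (X ω)|}).toReal)) / t ^ p) atTop) ∧
    (∃ α' : ℝ, α / M ^ p ≤ α' ∧ α' ≤ α / m ^ p ∧
      ∃ t : ℕ → ℝ, StrictMono t ∧ Tendsto t atTop atTop ∧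
        Tendsto (fun n =>
            (-Real.log ((μ {ω | t n ≤ |f (X ω)|}).toReal)) / (t n) ^ p)
          atTop (nhds α')) := by
  have hM : 0 < M := hm.trans_le hMm
  set c := |f 0|
  have hrate : Tendsto (fun y => -log (μ.real {ω | y ≤ |X ω|}) / y ^ p) atTop (𝓝 α) :=
    tendsto_neg_log_exp_mul_div_rpow hLpos hLsmall htail
  have hpos : ∀ᶠ y in atTop, 0 < μ.real {ω | y ≤ |X ω|} := by
    filter_upwards [htail, eventually_gt_atTop 0] with y hy hy0
    rw [measureReal_def, hy]
    exact mul_pos (exp_pos _) (hLpos y hy0)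
  have hlo : Tendsto (fun t => -log (μ.real {ω | (t - c) / M ≤ |X ω|}) / t ^ p) atTop
      (𝓝 (α / M ^ p)) := by
    simpa only [sub_eq_add_neg] using tendsto_comp_affine_div_rpow (-c) hM hrate
  have hhi := tendsto_comp_affine_div_rpow c hm hrate
  have hshift : Tendsto (fun t : ℝ => (t + c) / m) atTop atTop :=
    (tendsto_atTop_add_const_right _ c tendsto_id).atTop_div_const hm
  have hbetween : ∀ᶠ t in atTop,
      -log (μ.real {ω | (t - c) / M ≤ |X ω|}) / t ^ p ≤
        -log (μ.real {ω | t ≤ |f (X ω)|}) / t ^ p ∧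
      -log (μ.real {ω | t ≤ |f (X ω)|}) / t ^ p ≤
        -log (μ.real {ω | (t + c) / m ≤ |X ω|}) / t ^ p := by
    filter_upwards [eventually_ge_atTop 0, hshift.eventually hpos] with t ht hXt
    obtain ⟨hlower, hupper⟩ := neg_log_tail_comp_bounds X hbij.1 hM hm hfLip hfinvLip hXt
    exact ⟨div_le_div_of_nonneg_right hlower (rpow_nonneg ht p),
      div_le_div_of_nonneg_right hupper (rpow_nonneg ht p)⟩
  exact ⟨limsup_le_of_eventually_le_of_tendsto hlo hhi hbetween,
    le_liminf_of_eventually_le_of_tendsto hlo hhi hbetween,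
    exists_tendsto_subseq_of_eventually_le_of_tendsto hlo hhi hbetween⟩

/-- a bi-Lipschitz bijection maps the light-tailed class `𝓔ᵖ_α` into
`𝓔ᵖ_{α̃}` with `α̃ ∈ [α/M^p, α/m^p]`: the normalized negative log-survival function of
`f(X)` has limsup at most `α/m^p`, liminf at least `α/M^p`, and some value
`α̃` in that interval is attained as a limit along a subsequence. -/
theorem bilipschitz_preserves_exponential_class
    {Ω : Type*} [MeasureSpace Ω] (μ : Measure Ω) [IsProbabilityMeasure μ]
    (X : Ω → ℝ) (hX : Measurable X)
    (α p : ℝ) (hα : 0 < α) (hp : 0 < p)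
    (L : ℝ → ℝ) (hLpos : ∀ x, 0 < x → 0 < L x) (hL : SlowlyVarying L)
    (hLsmall : Tendsto (fun x => Real.log (L x) / x ^ p) atTop (nhds 0))
    (htail : ∀ᶠ x in atTop,
      (μ {ω | x ≤ |X ω|}).toReal = Real.exp (-α * x ^ p) * L x)
    (f : ℝ → ℝ) (hbij : Function.Bijective f)
    (M m : ℝ) (hm : 0 < m) (hMm : m ≤ M)
    (hfLip : ∀ x y, |f x - f y| ≤ M * |x - y|)
    (hfinvLip : ∀ u v, |Function.invFun f u - Function.invFun f v| ≤ (1 / m) * |u - v|) :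
    (limsup (fun t => (-Real.log ((μ {ω | t ≤ |f (X ω)|}).toReal)) / t ^ p) atTop
        ≤ α / m ^ p) ∧
    (α / M ^ p ≤
      liminf (fun t => (-Real.log ((μ {ω | t ≤ |f (X ω)|}).toReal)) / t ^ p) atTop) ∧
    (∃ α' : ℝ, α / M ^ p ≤ α' ∧ α' ≤ α / m ^ p ∧
      ∃ t : ℕ → ℝ, StrictMono t ∧ Tendsto t atTop atTop ∧
        Tendsto (fun n =>
            (-Real.log ((μ {ω | t n ≤ |f (X ω)|}).toReal)) / (t n) ^ p)
          atTop (nhds α')) :=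
  bilipschitz_preserves_exponential_class_general μ X α p L hLpos hLsmall htail f hbij M m hm hMm
    hfLip hfinvLip
end

section
/- Fix μ ∈ ℝ, σ > 0, and ξ > 0. Define T : ℝ → ℝ by T(z) = μ + σ·(s/ξ)·[erfc(|z−μ|/(σ√2))^{−ξ} − 1], where s = sign(z − μ) (with T(μ) = μ). Then T is strictly increasing on ℝ, its derivative for z ≠ μ equals T'(z) = √(2/π)·exp(−(z−μ)²/(2σ²))·erfc(|z−μ|/(σ√2))^{−(ξ+1)}, and T'(z) → √(2/π) as z → μ, so T is C¹ at μ with derivative √(2/π) independent of ξ and σ. -/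
/-!
On either side of `μ` the map is `z ↦ μ ± τ(|z - μ|)` for the single tail
`τ(u) = (σ/ξ)(erfc(u/(σ√2))^(-ξ) - 1)`. By the chain rule, with `erfc' x = -(2/√π) e^{-x²}`,
`τ' u = √(2/π) e^{-u²/(2σ²)} erfc(u/(σ√2))^(-(ξ+1))`, which is positive and continuous. As
`τ 0 = 0` the map is continuous at `μ`, and a function continuous at a point whose derivative
off that point extends continuously to it is differentiable there with the extended value. So
`T' z = τ'(|z - μ|)` everywhere, which is positive and continuous, and `erfc 0 = 1` gives
`T' μ = √(2/π)`.
-/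

open Real Set

/-- The complementary error function `erfc x = (2/√π) ∫_x^∞ e^{-t²} dt`. -/
noncomputable def erfc (x : ℝ) : ℝ :=
  (2 / Real.sqrt π) * ∫ t in Set.Ioi x, Real.exp (-t ^ 2)

/-- The Tail Transform Flow coordinate map with location `μ`, scale `σ` and tail
parameter `ξ` (equal on both sides). -/
noncomputable def TTF (μ σ ξ : ℝ) (z : ℝ) : ℝ :=
  μ + σ * (Real.sign (z - μ) / ξ) *
    (erfc (|z - μ| / (σ * Real.sqrt 2)) ^ (-ξ) - 1)

open MeasureTheory Filter Topology

lemma integrable_exp_neg_sq : Integrable fun t : ℝ => exp (-t ^ 2) := by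
  simpa using integrable_exp_neg_mul_sq one_pos

lemma erfc_eq_sub_intervalIntegral (x : ℝ) :
    erfc x = 2 / √π * ((∫ t in Ioi 0, exp (-t ^ 2)) - ∫ t in (0 : ℝ)..x, exp (-t ^ 2)) := by
  rw [erfc, ← intervalIntegral.integral_Ioi_sub_Ioi' integrable_exp_neg_sq.integrableOn
    integrable_exp_neg_sq.integrableOn, sub_sub_cancel]

lemma hasDerivAt_erfc (x : ℝ) : HasDerivAt erfc (-(2 / √π) * exp (-x ^ 2)) x := by
  have hcont : Continuous fun t : ℝ => exp (-t ^ 2) := by fun_prop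
  have h := (intervalIntegral.integral_hasDerivAt_right (hcont.intervalIntegrable 0 x)
    (hcont.stronglyMeasurableAtFilter _ _) hcont.continuousAt).const_sub
      (∫ t in Ioi 0, exp (-t ^ 2)) |>.const_mul (2 / √π)
  rw [funext erfc_eq_sub_intervalIntegral]
  simpa [neg_mul] using h

@[fun_prop]
lemma continuous_erfc : Continuous erfc :=
  continuous_iff_continuousAt.2 fun x => (hasDerivAt_erfc x).continuousAt

lemma erfc_zero : erfc 0 = 1 := by
  have hπ : √π ≠ 0 := (sqrt_pos.2 pi_pos).ne'
  have h := integral_gaussian_Ioi 1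
  simp only [neg_mul, one_mul, div_one] at h
  rw [erfc, h]
  field_simp

lemma erfc_pos (x : ℝ) : 0 < erfc x :=
  have : NeZero (volume.restrict (Ioi x)) := ⟨by simp⟩
  mul_pos (by positivity) (integral_exp_pos integrable_exp_neg_sq.integrableOn)

@[fun_prop]
lemma Continuous.erfc_rpow_const {α : Type*} [TopologicalSpace α] {f : α → ℝ} (hf : Continuous f)
    (p : ℝ) : Continuous fun x => erfc (f x) ^ p :=
  (continuous_erfc.comp hf).rpow_const fun _ => Or.inl (erfc_pos _).ne'

lemma Real.abs_sign_le_one (r : ℝ) : |Real.sign r| ≤ 1 := by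
  rcases Real.sign_apply_eq r with h | h | h <;> simp [h]

noncomputable def ttfTail (σ ξ u : ℝ) : ℝ := σ / ξ * (erfc (u / (σ * √2)) ^ (-ξ) - 1)

noncomputable def ttfTailDeriv (σ ξ u : ℝ) : ℝ :=
  √(2 / π) * exp (-u ^ 2 / (2 * σ ^ 2)) * erfc (u / (σ * √2)) ^ (-(ξ + 1))

section Tail

variable {σ ξ : ℝ}

lemma ttfTail_zero : ttfTail σ ξ 0 = 0 := by simp [ttfTail, erfc_zero]

@[fun_prop]
lemma continuous_ttfTail : Continuous (ttfTail σ ξ) := by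
  unfold ttfTail
  fun_prop

lemma ttfTailDeriv_zero : ttfTailDeriv σ ξ 0 = √(2 / π) := by
  simp [ttfTailDeriv, erfc_zero]

lemma ttfTailDeriv_pos (u : ℝ) : 0 < ttfTailDeriv σ ξ u := by
  have := rpow_pos_of_pos (erfc_pos (u / (σ * √2))) (-(ξ + 1))
  unfold ttfTailDeriv
  positivity

@[fun_prop]
lemma continuous_ttfTailDeriv : Continuous (ttfTailDeriv σ ξ) := by
  unfold ttfTailDeriv
  fun_prop

lemma hasDerivAt_ttfTail (hσ : σ ≠ 0) (hξ : ξ ≠ 0) (u : ℝ) :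
    HasDerivAt (ttfTail σ ξ) (ttfTailDeriv σ ξ u) u := by
  set v := u / (σ * √2)
  have hv : HasDerivAt (fun w => w / (σ * √2)) (1 / (σ * √2)) u := (hasDerivAt_id u).div_const _
  have h := (((hasDerivAt_erfc v).comp u hv).rpow_const (p := -ξ)
    (Or.inl (erfc_pos v).ne')).sub_const 1 |>.const_mul (σ / ξ)
  simp only [Function.comp_apply] at h
  refine h.congr_deriv ?_
  have hv2 : -u ^ 2 / (2 * σ ^ 2) = -v ^ 2 := by
    rw [div_pow, mul_pow, sq_sqrt zero_le_two]; ring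
  rw [ttfTailDeriv, hv2, neg_add', sqrt_div zero_le_two]
  have := (sqrt_pos.2 pi_pos).ne'
  field_simp
  rw [sq_sqrt zero_le_two]

end Tail

section TTF

variable {μ σ ξ : ℝ}

lemma TTF_eq_add_sign_mul_ttfTail (z : ℝ) :
    TTF μ σ ξ z = μ + Real.sign (z - μ) * ttfTail σ ξ |z - μ| := by
  rw [TTF, ttfTail]; ring

lemma hasDerivAt_TTF_of_ne (hσ : σ ≠ 0) (hξ : ξ ≠ 0) {z : ℝ} (hz : z ≠ μ) :
    HasDerivAt (TTF μ σ ξ) (ttfTailDeriv σ ξ |z - μ|) z := by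
  rcases hz.lt_or_gt with hz | hz
  · have h := ((hasDerivAt_ttfTail hσ hξ (μ - z)).comp z
      ((hasDerivAt_id z).const_sub μ)).const_sub μ
    rw [abs_of_neg (sub_neg.2 hz), neg_sub]
    refine (h.congr_deriv (by simp)).congr_of_eventuallyEq ?_
    filter_upwards [Iio_mem_nhds hz] with w hw
    rw [TTF_eq_add_sign_mul_ttfTail, Real.sign_of_neg (sub_neg.2 hw), abs_of_neg (sub_neg.2 hw)]
    simp [sub_eq_add_neg]
  · have h := ((hasDerivAt_ttfTail hσ hξ (z - μ)).comp z
      ((hasDerivAt_id z).sub_const μ)).const_add μ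
    rw [abs_of_pos (sub_pos.2 hz)]
    refine (h.congr_deriv (by simp)).congr_of_eventuallyEq ?_
    filter_upwards [Ioi_mem_nhds hz] with w hw
    rw [TTF_eq_add_sign_mul_ttfTail, Real.sign_of_pos (sub_pos.2 hw), abs_of_pos (sub_pos.2 hw)]
    simp

lemma continuousAt_TTF_center : ContinuousAt (TTF μ σ ξ) μ := by
  have hsign : IsBoundedUnder (· ≤ ·) (𝓝 μ) ((‖·‖) ∘ fun z => Real.sign (z - μ)) :=
    isBoundedUnder_of ⟨1, fun z => Real.abs_sign_le_one _⟩
  have htail : Tendsto (fun z => ttfTail σ ξ |z - μ|) (𝓝 μ) (𝓝 0) :=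
    (by fun_prop : Continuous fun z => ttfTail σ ξ |z - μ|).tendsto' μ 0 (by simp [ttfTail_zero])
  have := (isBoundedUnder_le_mul_tendsto_zero hsign htail).const_add μ
  rw [ContinuousAt, funext TTF_eq_add_sign_mul_ttfTail]
  simpa using this

lemma hasDerivAt_TTF (hσ : σ ≠ 0) (hξ : ξ ≠ 0) (z : ℝ) :
    HasDerivAt (TTF μ σ ξ) (ttfTailDeriv σ ξ |z - μ|) z := by
  rcases eq_or_ne z μ with rfl | hz
  · exact hasDerivAt_of_hasDerivAt_of_ne (fun _ => hasDerivAt_TTF_of_ne hσ hξ)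
      continuousAt_TTF_center (by fun_prop)
  · exact hasDerivAt_TTF_of_ne hσ hξ hz

end TTF

/-- the TTF map is strictly increasing, has the stated derivative away
from `μ`, and is `C¹` at `μ` with derivative `√(2/π)` independent of `ξ` and `σ`. -/
theorem TTF_strictMono_deriv (μ σ ξ : ℝ) (hσ : 0 < σ) (hξ : 0 < ξ) :
    StrictMono (TTF μ σ ξ) ∧
    (∀ z : ℝ, z ≠ μ →
      HasDerivAt (TTF μ σ ξ)
        (Real.sqrt (2 / π) * Real.exp (-(z - μ) ^ 2 / (2 * σ ^ 2)) *
          erfc (|z - μ| / (σ * Real.sqrt 2)) ^ (-(ξ + 1))) z) ∧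
    HasDerivAt (TTF μ σ ξ) (Real.sqrt (2 / π)) μ ∧
    ContinuousAt (deriv (TTF μ σ ξ)) μ := by
  have hT := hasDerivAt_TTF (μ := μ) hσ.ne' hξ.ne'
  refine ⟨strictMono_of_hasDerivAt_pos hT fun _ => ttfTailDeriv_pos _, fun z _ => ?_, ?_, ?_⟩
  · simpa only [ttfTailDeriv, sq_abs] using hT z
  · simpa [ttfTailDeriv_zero] using hT μ
  · rw [funext fun z => (hT z).deriv]
    fun_prop
end
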